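/- arXiv:2205.05183 — 2 statements merged into one kernel-verified Lean document; each statement's English description precedes it below -/
import Mathlib

section
/- Let K, p, T be positive integers with q^{K(Tp+1)} · ∏_{t=1}^{T} q^{(t-1)Kp²} ≥ q^{K²}. Then T ≥ 1/2 - 1/p + sqrt(1/4 - 1/p - 1/p² + 2K/p²). In particular T ≥ √(2K)/p - O(1). -/
/-!
Comparing exponents of `q` turns the hypothesis into the quadratic inequality
`p²T² - p(p-2)T + 2(1-K) ≥ 0` in `T`. Since `T ≥ 1` lies to the right of the vertex
`1/2 - 1/p` of this parabola, `T` is at least its larger root, which is the stated bound.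
-/

open Finset

theorem sum_Icc_one_sub_one_mul_two (T : ℕ) :
    (∑ t ∈ Icc 1 T, (t - 1)) * 2 = T * (T - 1) := by
  rw [← Ico_add_one_right_eq_Icc, sum_Ico_eq_sum_range, ← sum_range_id_mul_two]
  simp

theorem two_mul_le_quadratic_of_pow_prod_ge {q K p T : ℕ} (hq : 2 ≤ q)
    (h : q ^ (K * (T * p + 1)) * ∏ t ∈ Icc 1 T, q ^ ((t - 1) * K * p ^ 2) ≥ q ^ (K ^ 2)) :
    2 * (K : ℝ) ≤ p ^ 2 * T ^ 2 - p * (p - 2) * T + 2 := by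
  have hexp : K ^ 2 ≤ K * (T * p + 1) + ∑ t ∈ Icc 1 T, (t - 1) * K * p ^ 2 := by
    rwa [prod_pow_eq_pow_sum, ← pow_add, ge_iff_le, pow_le_pow_iff_right₀ hq] at h
  have hsum : (∑ t ∈ Icc 1 T, (t - 1) * K * p ^ 2) * 2 = K * (T * (T - 1) * p ^ 2) := by
    rw [← sum_mul, ← sum_mul, mul_right_comm, mul_right_comm _ K, sum_Icc_one_sub_one_mul_two]
    ring
  have hK : 2 * K ≤ 2 * (T * p + 1) + T * (T - 1) * p ^ 2 := by
    rcases K.eq_zero_or_pos with rfl | hKpos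
    · exact Nat.zero_le _
    · refine Nat.le_of_mul_le_mul_left ?_ hKpos
      nlinarith
  rcases T.eq_zero_or_pos with rfl | hT
  · simpa using hK
  · have := (Nat.cast_le (α := ℝ)).mpr hK
    push_cast [Nat.cast_sub hT] at this
    linarith

theorem add_sqrt_le_of_quadratic {K p T : ℝ} (hp : 0 < p) (hvertex : 1 / 2 - 1 / p ≤ T)
    (hquad : 2 * K ≤ p ^ 2 * T ^ 2 - p * (p - 2) * T + 2) :
    1 / 2 - 1 / p + √(1 / 4 - 1 / p - 1 / p ^ 2 + 2 * K / p ^ 2) ≤ T := by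
  have hdisc : 1 / 4 - 1 / p - 1 / p ^ 2 + 2 * K / p ^ 2 ≤ (T - (1 / 2 - 1 / p)) ^ 2 := by
    have hdiff : (T - (1 / 2 - 1 / p)) ^ 2 - (1 / 4 - 1 / p - 1 / p ^ 2 + 2 * K / p ^ 2)
        = (p ^ 2 * T ^ 2 - p * (p - 2) * T + 2 - 2 * K) / p ^ 2 := by
      field_simp; ring
    have hnonneg : 0 ≤ (p ^ 2 * T ^ 2 - p * (p - 2) * T + 2 - 2 * K) / p ^ 2 := by
      apply div_nonneg <;> [linarith; positivity]
    linarith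
  linarith [(Real.sqrt_le_left (sub_nonneg.mpr hvertex)).mpr hdisc]

theorem stmt2_general (q K p T : ℕ) (hq : 2 ≤ q) (hp : 0 < p) (hT : 0 < T)
    (h : q ^ (K * (T * p + 1)) * ∏ t ∈ Icc 1 T, q ^ ((t - 1) * K * p ^ 2)
        ≥ q ^ (K ^ 2)) :
    (T : ℝ) ≥ 1 / 2 - 1 / p +
      Real.sqrt (1 / 4 - 1 / p - 1 / (p : ℝ) ^ 2 + 2 * K / (p : ℝ) ^ 2) := by
  have hvertex : 1 / 2 - 1 / (p : ℝ) ≤ T := by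
    have : (1 : ℝ) ≤ T := by exact_mod_cast hT
    linarith [show (0 : ℝ) ≤ 1 / p by positivity]
  exact add_sqrt_le_of_quadratic (by exact_mod_cast hp) hvertex
    (two_mul_le_quadratic_of_pow_prod_ge hq h)

/-- If `q^{K(Tp+1)} · ∏_{t=1}^T q^{(t-1)Kp²} ≥ q^{K²}` (with `q ≥ 2` and
`K, p, T` positive), then `T ≥ 1/2 - 1/p + √(1/4 - 1/p - 1/p² + 2K/p²)`,
which is `√(2K)/p - O(1)`. -/
theorem stmt2 (q K p T : ℕ) (hq : 2 ≤ q) (hK : 0 < K) (hp : 0 < p) (hT : 0 < T)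
    (h : q ^ (K * (T * p + 1)) * ∏ t ∈ Icc 1 T, q ^ ((t - 1) * K * p ^ 2)
        ≥ q ^ (K ^ 2)) :
    (T : ℝ) ≥ 1 / 2 - 1 / p +
      Real.sqrt (1 / 4 - 1 / p - 1 / (p : ℝ) ^ 2 + 2 * K / (p : ℝ) ^ 2) :=
  stmt2_general q K p T hq hp hT h
end

section
/- In the radix-(p+1) FFT recursion, if Q(k,t) = f_{k_{H−1}⋯k_t}(γ_{k_{t−1}⋯k_0}) then Q(k,t+1) = ∑_{ρ=0}^{p} (γ_{k_t⋯k_0})^ρ · Q(k_ρ^{(t)}, t), where k_ρ^{(t)} has the same (p+1)-ary digits as k except digit t is replaced by ρ. -/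
open Finset Polynomial

/-- The radix-`(p+1)` coefficient split: child `ρ` of a node polynomial `g`,
`f_{wρ}(z) = ∑_{d ≡ ρ mod (p+1)} b_d z^{(d-ρ)/(p+1)}` where `b_d` are the
coefficients of `g = f_w`. -/
noncomputable def splitChild {F : Type*} [Field F] (p ρ : ℕ) (g : Polynomial F) :
    Polynomial F :=
  ∑ d ∈ range (g.natDegree + 1),
    if d % (p + 1) = ρ then Polynomial.C (g.coeff d) * Polynomial.X ^ ((d - ρ) / (p + 1))
    else 0

/-- The node of the polynomial tree reached from root `f` along the
root-to-node digit path `w`. -/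
noncomputable def nodePoly {F : Type*} [Field F] (p : ℕ) (f : Polynomial F)
    (w : List ℕ) : Polynomial F :=
  w.foldl (fun g ρ => splitChild p ρ g) f

/-- The `i`-th digit of `k` in radix `p+1`. -/
def digitAt (p k i : ℕ) : ℕ := k / (p + 1) ^ i % (p + 1)

/-- The digit path `k_{H-1}, k_{H-2}, …, k_t` (from root to node). -/
def digitPath (p H t k : ℕ) : List ℕ :=
  (List.range (H - t)).map fun i => digitAt p k (H - 1 - i)

/-- `γ` at level `h` for the digit string with value `v`:
`γ_{k_{h-1}⋯k_0} = (β^v)^{(p+1)^{H-h}}` where `v = k_{h-1}(p+1)^{h-1} + ⋯ + k_0`. -/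
noncomputable def gammaVal {F : Type*} [Field F] (β : F) (p H h v : ℕ) : F :=
  (β ^ v) ^ ((p + 1) ^ (H - h))

/-- `Q(k,t) = f_{k_{H-1}⋯k_t}(γ_{k_{t-1}⋯k_0})`. -/
noncomputable def Qval {F : Type*} [Field F] (β : F) (p H : ℕ) (f : Polynomial F)
    (k t : ℕ) : F :=
  (nodePoly p f (digitPath p H t k)).eval (gammaVal β p H t (k % (p + 1) ^ t))

/-- `k_ρ^{(t)}`: the number with the same radix-`(p+1)` digits as `k`, except
that digit `t` is replaced by `ρ`. -/
def replaceDigit (p k t ρ : ℕ) : ℕ :=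
  k / (p + 1) ^ (t + 1) * (p + 1) ^ (t + 1) + ρ * (p + 1) ^ t + k % (p + 1) ^ t

/-! Splitting `f_w(z) = ∑_ρ z^ρ f_{wρ}(z^{p+1})` at `z = γ_{k_t⋯k_0}` writes `Q(k,t+1)` as a
sum over the children `f_{wρ}` evaluated at `γ_{k_t⋯k_0}^{p+1}`. The path to child `ρ` is the
digit path of `k_ρ^{(t)}` at level `t`, and because `β^{(p+1)^H} = 1` the point
`γ_{k_t⋯k_0}^{p+1}` is `γ_{k_{t-1}⋯k_0}`, which depends only on the lowest `t` digits. -/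

lemma splitChild_eval {F : Type*} [Field F] (p ρ : ℕ) (g : Polynomial F) (z : F) :
    (splitChild p ρ g).eval z =
      ∑ d ∈ (range (g.natDegree + 1)).filter (· % (p + 1) = ρ),
        g.coeff d * z ^ (d / (p + 1)) := by
  rw [splitChild, eval_finsetSum, sum_filter]
  refine sum_congr rfl fun d _ => ?_
  split_ifs with hd
  · rw [eval_mul, eval_C, eval_pow, eval_X, ← hd, ← Nat.div_eq_sub_mod_div]
  · exact eval_zero

lemma eval_eq_sum_pow_mul_eval_splitChild {F : Type*} [Field F] (p : ℕ) (g : Polynomial F)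
    (z : F) :
    g.eval z = ∑ ρ ∈ range (p + 1), z ^ ρ * (splitChild p ρ g).eval (z ^ (p + 1)) := by
  have hterm : ∀ ρ ∈ range (p + 1), z ^ ρ * (splitChild p ρ g).eval (z ^ (p + 1)) =
      ∑ d ∈ (range (g.natDegree + 1)).filter (· % (p + 1) = ρ), g.coeff d * z ^ d := by
    intro ρ _
    rw [splitChild_eval, mul_sum]
    refine sum_congr rfl fun d hd => ?_
    rw [← (mem_filter.1 hd).2, mul_left_comm, ← pow_mul, ← pow_add, Nat.mod_add_div]
  rw [sum_congr rfl hterm,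
    sum_fiberwise_of_maps_to fun d _ => mem_range.2 (Nat.mod_lt d p.succ_pos), eval_eq_sum_range]

lemma nodePoly_append_singleton {F : Type*} [Field F] (p : ℕ) (f : Polynomial F)
    (w : List ℕ) (ρ : ℕ) :
    nodePoly p f (w ++ [ρ]) = splitChild p ρ (nodePoly p f w) := by
  simp [nodePoly]

section replaceDigit

variable (p k t ρ : ℕ)

lemma replaceDigit_eq_mul_add :
    replaceDigit p k t ρ =
      (k / (p + 1) ^ (t + 1) * (p + 1) + ρ) * (p + 1) ^ t + k % (p + 1) ^ t := by
  rw [replaceDigit, pow_succ]; ring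

lemma replaceDigit_mod_pow : replaceDigit p k t ρ % (p + 1) ^ t = k % (p + 1) ^ t := by
  rw [replaceDigit_eq_mul_add, add_comm, Nat.add_mul_mod_self_right, Nat.mod_mod_of_dvd _ dvd_rfl]

lemma replaceDigit_div_pow :
    replaceDigit p k t ρ / (p + 1) ^ t = k / (p + 1) ^ (t + 1) * (p + 1) + ρ := by
  rw [replaceDigit_eq_mul_add, add_comm, Nat.add_mul_div_right _ _ (pow_pos p.succ_pos t),
    Nat.div_eq_of_lt (Nat.mod_lt _ (pow_pos p.succ_pos t)), zero_add]

variable {ρ}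

lemma digitAt_replaceDigit_self (hρ : ρ < p + 1) : digitAt p (replaceDigit p k t ρ) t = ρ := by
  rw [digitAt, replaceDigit_div_pow, add_comm, Nat.add_mul_mod_self_right, Nat.mod_eq_of_lt hρ]

lemma replaceDigit_div_pow_succ (hρ : ρ < p + 1) :
    replaceDigit p k t ρ / (p + 1) ^ (t + 1) = k / (p + 1) ^ (t + 1) := by
  rw [pow_succ, ← Nat.div_div_eq_div_mul, replaceDigit_div_pow, add_comm,
    Nat.add_mul_div_right _ _ p.succ_pos, Nat.div_eq_of_lt hρ, zero_add, ← pow_succ]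

lemma digitAt_replaceDigit_of_lt {i : ℕ} (hρ : ρ < p + 1) (hi : t < i) :
    digitAt p (replaceDigit p k t ρ) i = digitAt p k i := by
  obtain ⟨j, rfl⟩ := Nat.exists_eq_add_of_le (Nat.succ_le_of_lt hi)
  rw [digitAt, digitAt, pow_add, ← Nat.div_div_eq_div_mul, ← Nat.div_div_eq_div_mul,
    replaceDigit_div_pow_succ p k t hρ]

lemma digitPath_replaceDigit (H : ℕ) (hρ : ρ < p + 1) (ht : t < H) :
    digitPath p H t (replaceDigit p k t ρ) = digitPath p H (t + 1) k ++ [ρ] := by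
  obtain ⟨n, hn⟩ : ∃ n, H - t = n + 1 ∧ H - (t + 1) = n := ⟨H - (t + 1), by omega, rfl⟩
  rw [digitPath, digitPath, hn.1, hn.2, List.range_succ, List.map_append, List.map_singleton,
    show H - 1 - n = t by omega, digitAt_replaceDigit_self p k t hρ]
  congr 1
  refine List.map_congr_left fun i hi => digitAt_replaceDigit_of_lt p k t hρ ?_
  rw [List.mem_range] at hi
  omega

end replaceDigit

section gammaVal

variable {F : Type*} [Field F] (β : F) (p H : ℕ)

lemma gammaVal_succ_pow {t : ℕ} (ht : t < H) (v : ℕ) :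
    gammaVal β p H (t + 1) v ^ (p + 1) = gammaVal β p H t v := by
  rw [gammaVal, gammaVal, ← pow_mul, ← pow_succ, show H - (t + 1) + 1 = H - t by omega]

lemma gammaVal_mod_pow (hβ : β ^ (p + 1) ^ H = 1) {t : ℕ} (ht : t ≤ H) (v : ℕ) :
    gammaVal β p H t (v % (p + 1) ^ t) = gammaVal β p H t v := by
  have hH : (p + 1) ^ t * (p + 1) ^ (H - t) = (p + 1) ^ H := by
    rw [← pow_add, Nat.add_sub_cancel' ht]
  have hhigh : (β ^ ((p + 1) ^ t * (v / (p + 1) ^ t))) ^ (p + 1) ^ (H - t) = 1 := by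
    rw [← pow_mul, mul_right_comm, hH, pow_mul, hβ, one_pow]
  conv_rhs => rw [← Nat.mod_add_div v ((p + 1) ^ t)]
  rw [gammaVal, gammaVal, pow_add, mul_pow, hhigh, mul_one]

end gammaVal

theorem stmt11_general {F : Type*} [Field F] (p H : ℕ)
    (β : F) (hβ : IsPrimitiveRoot β ((p + 1) ^ H))
    (f : Polynomial F)
    (k t : ℕ) (ht : t < H) :
    Qval β p H f k (t + 1) =
      ∑ ρ ∈ range (p + 1),
        (gammaVal β p H (t + 1) (k % (p + 1) ^ (t + 1))) ^ ρ *
          Qval β p H f (replaceDigit p k t ρ) t := by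
  set g := nodePoly p f (digitPath p H (t + 1) k)
  set γ := gammaVal β p H (t + 1) (k % (p + 1) ^ (t + 1))
  have hγ : γ ^ (p + 1) = gammaVal β p H t (k % (p + 1) ^ t) := by
    rw [gammaVal_succ_pow β p H ht, ← gammaVal_mod_pow β p H hβ.pow_eq_one ht.le,
      Nat.mod_mod_of_dvd _ (pow_dvd_pow _ t.le_succ), gammaVal_mod_pow β p H hβ.pow_eq_one ht.le]
  calc Qval β p H f k (t + 1) = g.eval γ := rfl
    _ = ∑ ρ ∈ range (p + 1), γ ^ ρ * (splitChild p ρ g).eval (γ ^ (p + 1)) :=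
      eval_eq_sum_pow_mul_eval_splitChild p g γ
    _ = _ := sum_congr rfl fun ρ hρ => by
      rw [Qval, digitPath_replaceDigit p k t H (mem_range.1 hρ) ht, nodePoly_append_singleton,
        replaceDigit_mod_pow, hγ]

/-- The radix-`(p+1)` FFT recursion: with `Q(k,t) = f_{k_{H-1}⋯k_t}(γ_{k_{t-1}⋯k_0})`,
one has `Q(k,t+1) = ∑_{ρ=0}^{p} (γ_{k_t⋯k_0})^ρ · Q(k_ρ^{(t)}, t)`. -/
theorem stmt11 {F : Type*} [Field F] (p H : ℕ) (hp : 1 ≤ p)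
    (β : F) (hβ : IsPrimitiveRoot β ((p + 1) ^ H))
    (x : ℕ → F) (f : Polynomial F)
    (hf : f = ∑ k ∈ range ((p + 1) ^ H), Polynomial.C (x k) * Polynomial.X ^ k)
    (k t : ℕ) (hk : k < (p + 1) ^ H) (ht : t < H) :
    Qval β p H f k (t + 1) =
      ∑ ρ ∈ range (p + 1),
        (gammaVal β p H (t + 1) (k % (p + 1) ^ (t + 1))) ^ ρ *
          Qval β p H f (replaceDigit p k t ρ) t :=
  stmt11_general p H β hβ f k t ht
end
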